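/- arXiv:2604.22019 — 2 statements merged into one kernel-verified Lean document; each statement's English description precedes it below -/
import Mathlib

section
/- Let Ω = {ω_1, ..., ω_n} be an LF-inducing set, and for each positive integer M define 𝒜(M) = { ∏_{i=1}^n ω_i^{m_i} : m_1, ..., m_n nonnegative integers with ∑_{i=1}^n m_i = M }. If there exists a positive integer K such that 1 ∈ 𝒜(M) for every integer M ≥ K, then the two-sided Mahavier dynamical system (I_{F_Ω}, σ_{F_Ω}) is topologically mixing. -/
open Set Filter Topology

/-- One-sided Mahavier product of a relation `F` on `X`. -/
def MahavierPlus {X : Type*} (F : Set (X × X)) : Set (ℕ → X) :=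
  {x | ∀ n : ℕ, (x n, x (n + 1)) ∈ F}

/-- Two-sided Mahavier product of a relation `F` on `X`. -/
def MahavierTwo {X : Type*} (F : Set (X × X)) : Set (ℤ → X) :=
  {x | ∀ n : ℤ, (x n, x (n + 1)) ∈ F}

/-- The shift map on the one-sided Mahavier product. -/
def shiftPlus {X : Type*} (F : Set (X × X)) (x : MahavierPlus F) : MahavierPlus F :=
  ⟨fun n => (x : ℕ → X) (n + 1), fun n => x.2 (n + 1)⟩

/-- The shift map on the two-sided Mahavier product. -/
def shiftTwo {X : Type*} (F : Set (X × X)) (x : MahavierTwo F) : MahavierTwo F :=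
  ⟨fun n => (x : ℤ → X) (n + 1), fun n => x.2 (n + 1)⟩

/-- The metric `D(x,y) = sup_{n ≥ 1} d(x_n, y_n)/2^n` on one-sided sequences
(coordinates are indexed from `0` here, so the weight is `2^(n+1)`). -/
noncomputable def DPlus {X : Type*} [PseudoMetricSpace X] (x y : ℕ → X) : ℝ :=
  ⨆ n : ℕ, dist (x n) (y n) / 2 ^ (n + 1)

/-- The metric `D(x,y) = sup_{n ∈ ℤ} d(x_n, y_n)/2^{|n|}` on two-sided sequences. -/
noncomputable def DTwo {X : Type*} [PseudoMetricSpace X] (x y : ℤ → X) : ℝ :=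
  ⨆ n : ℤ, dist (x n) (y n) / 2 ^ n.natAbs

/-- Topological transitivity. -/
def TopTransitive {Y : Type*} [TopologicalSpace Y] (f : Y → Y) : Prop :=
  ∀ U V : Set Y, IsOpen U → IsOpen V → U.Nonempty → V.Nonempty →
    ∃ n : ℕ, (f^[n] '' U ∩ V).Nonempty

/-- Topological mixing. -/
def TopMixing {Y : Type*} [TopologicalSpace Y] (f : Y → Y) : Prop :=
  ∀ U V : Set Y, IsOpen U → IsOpen V → U.Nonempty → V.Nonempty →
    ∃ n₀ : ℕ, ∀ n : ℕ, n₀ ≤ n → (f^[n] '' U ∩ V).Nonempty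

/-- The shadowing property for a map `f` with respect to a distance `dY`. -/
def ShadowingProp {Y : Type*} (dY : Y → Y → ℝ) (f : Y → Y) : Prop :=
  ∀ ε : ℝ, 0 < ε → ∃ δ : ℝ, 0 < δ ∧ ∀ x : ℕ → Y,
    (∀ k : ℕ, dY (f (x k)) (x (k + 1)) < δ) →
    ∃ y : Y, ∀ k : ℕ, dY (f^[k] y) (x k) < ε

/-- The specification property for a map `f` with respect to a distance `dY`. -/
def SpecProp {Y : Type*} (dY : Y → Y → ℝ) (f : Y → Y) : Prop :=
  ∀ ε : ℝ, 0 < ε → ∃ N : ℕ, 0 < N ∧ ∀ n : ℕ, 0 < n →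
    ∀ x : Fin n → Y, ∀ k l : Fin n → ℕ,
      (∀ i, k i ≤ l i) →
      (∀ i j : Fin n, (i : ℕ) + 1 = (j : ℕ) → l i + N ≤ k j) →
      ∃ y : Y, ∀ i : Fin n, ∀ m : ℕ, k i ≤ m → m ≤ l i →
        dY (f^[m] y) (f^[m] (x i)) ≤ ε

/-- The CR-specification property for the one-sided Mahavier product of `F`. -/
def CRSpec {X : Type*} [PseudoMetricSpace X] (F : Set (X × X)) : Prop :=
  ∀ ε : ℝ, 0 < ε → ∃ N : ℕ, 0 < N ∧ ∀ n : ℕ, 0 < n →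
    ∀ x : Fin n → MahavierPlus F, ∀ k l : Fin n → ℕ,
      (∀ i, k i ≤ l i) →
      (∀ i j : Fin n, (i : ℕ) + 1 = (j : ℕ) → l i + N ≤ k j) →
      ∃ y : MahavierPlus F, ∀ i : Fin n, ∀ m : ℕ, k i ≤ m → m ≤ l i →
        dist ((x i : ℕ → X) m) ((y : ℕ → X) m) ≤ ε

/-- The image of a set under a relation. -/
def relImage {X : Type*} (F : Set (X × X)) (A : Set X) : Set X :=
  {y | ∃ a ∈ A, (a, y) ∈ F}

/-- Composition of relations. -/
def relComp {X : Type*} (F G : Set (X × X)) : Set (X × X) :=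
  {p | ∃ z : X, (p.1, z) ∈ F ∧ (z, p.2) ∈ G}

/-- Iterated composition `F^n` of a relation with itself. -/
def relPow {X : Type*} (F : Set (X × X)) : ℕ → Set (X × X)
  | 0 => {p | p.1 = p.2}
  | n + 1 => relComp (relPow F n) F

/-- A finite set `Ω` of positive reals is LF-inducing if it has at least two elements,
all its elements are positive, and it contains elements `ω₁ < 1 < ω₂` that never
connect: `ω₁^k = ω₂^l` (for integers `k, l`) only when `k = l = 0`. -/
def LFInducing (Ω : Finset ℝ) : Prop :=
  2 ≤ Ω.card ∧ (∀ ω ∈ Ω, 0 < ω) ∧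
  ∃ ω₁ ∈ Ω, ∃ ω₂ ∈ Ω, ω₁ < 1 ∧ 1 < ω₂ ∧
    ∀ k l : ℤ, ω₁ ^ k = ω₂ ^ l → k = 0 ∧ l = 0

/-- The relation `F_Ω = {(x,y) ∈ [0,1]² : y = ω·x for some ω ∈ Ω}`. -/
def FOmega (Ω : Finset ℝ) : Set (ℝ × ℝ) :=
  {p | p.1 ∈ Set.Icc (0 : ℝ) 1 ∧ p.2 ∈ Set.Icc (0 : ℝ) 1 ∧ ∃ ω ∈ Ω, p.2 = ω * p.1}

/-!
Given open sets `U ∋ x` and `V ∋ y`, we may take all coordinates of `x` and `y` positive: a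
sequence with one zero coordinate is identically zero, and it is a limit of small multiples of a
positive "tent" sequence. Only finitely many coordinates are seen by `U` and `V`, so for all large
`n` it suffices to follow `x` up to index `R`, walk in `n - 2R` multiplicative steps from
`a = x_R` to some `c` slightly below `b = y_{-R}`, and then follow `(c / b) • y`.
Since `log ω₂ / log ω₁` is irrational, the products `ω₁^p ω₂^q` are dense in `(0, ∞)`, which
gives `p, q` with `a ω₁^p ω₂^q` just below `b`; the hypothesis pads this word with a word of
product `1` to every length `≥ K + p + q`. Taking the letters of the word in increasing order
keeps the walk inside `[0, 1]`.
-/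

lemma exists_natCast_mul_add_natCast_mul_mem_Ioo {α β : ℝ} (hα : α < 0) (hβ : 0 < β)
    (hirr : Irrational (β / α)) {s t : ℝ} (hst : s < t) :
    ∃ p q : ℕ, (p : ℝ) * α + q * β ∈ Ioo s t := by
  have : Fact (0 < -α) := ⟨neg_pos.2 hα⟩
  have hdense : DenseRange (fun q : ℕ => q • (β : AddCircle (-α))) :=
    denseRange_zsmul_iff_nsmul.1 <| AddCircle.denseRange_zsmul_coe_iff.2 <| by
      rw [div_neg]; exact hirr.neg
  obtain ⟨Q, hQ⟩ := exists_nat_ge (t / β)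
  -- Shifting by `Q • β` keeps the orbit dense and makes the `α`-coefficient below nonnegative.
  have hshift : DenseRange (fun q : ℕ => (((Q + q : ℕ) * β : ℝ) : AddCircle (-α))) := by
    have := (Homeomorph.addLeft (Q • (β : AddCircle (-α)))).surjective.denseRange.comp hdense
      (Homeomorph.addLeft _).continuous
    convert this using 2 with q
    simp [add_mul, ← nsmul_eq_mul]
  obtain ⟨q, v, hv, hvq⟩ :=
    hshift.exists_mem_open (QuotientAddGroup.isOpenMap_coe _ isOpen_Ioo)
      ((nonempty_Ioo.2 hst).image _)
  obtain ⟨k, hk⟩ := (AddCircle.coe_eq_zero_iff (-α)).1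
    (show (((Q + q : ℕ) * β - v : ℝ) : AddCircle (-α)) = 0 by
      rw [AddCircle.coe_sub, hvq, sub_self])
  rw [zsmul_eq_mul] at hk
  have hQt : t ≤ Q * β := (div_le_iff₀ hβ).1 hQ
  have hk0 : 0 ≤ k := by
    have : (0 : ℝ) < k * -α := by rw [hk]; push_cast; nlinarith [hv.2]
    exact_mod_cast (pos_of_mul_pos_left this (neg_pos.2 hα).le).le
  refine ⟨k.toNat, Q + q, ?_⟩
  have hkcast : ((k.toNat : ℕ) : ℝ) = k := by exact_mod_cast Int.toNat_of_nonneg hk0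
  rw [hkcast]
  convert hv using 1
  linarith

lemma irrational_log_div_log {ω₁ ω₂ : ℝ} (h₁ : 0 < ω₁) (h₂ : 0 < ω₂) (h₁₁ : ω₁ ≠ 1)
    (hLF : ∀ k l : ℤ, ω₁ ^ k = ω₂ ^ l → k = 0 ∧ l = 0) :
    Irrational (Real.log ω₂ / Real.log ω₁) := by
  rw [irrational_iff_ne_rational]
  intro a b hb h
  have hlog : Real.log ω₁ ≠ 0 := Real.log_ne_zero_of_pos_of_ne_one h₁ h₁₁
  have : ω₁ ^ a = ω₂ ^ b := by
    apply Real.log_injOn_pos (zpow_pos h₁ a) (zpow_pos h₂ b)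
    rw [Real.log_zpow, Real.log_zpow]
    field_simp at h
    linarith
  exact hb (hLF a b this).2

lemma exists_pow_mul_pow_mem_Ioo {ω₁ ω₂ : ℝ} (h₁ : 0 < ω₁) (h₁₁ : ω₁ < 1) (h₂ : 1 < ω₂)
    (hLF : ∀ k l : ℤ, ω₁ ^ k = ω₂ ^ l → k = 0 ∧ l = 0) {u v : ℝ} (hu : 0 < u) (huv : u < v) :
    ∃ p q : ℕ, ω₁ ^ p * ω₂ ^ q ∈ Ioo u v := by
  obtain ⟨p, q, hpq⟩ := exists_natCast_mul_add_natCast_mul_mem_Ioo (Real.log_neg h₁ h₁₁)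
    (Real.log_pos h₂) (irrational_log_div_log h₁ (zero_lt_one.trans h₂) h₁₁.ne hLF)
    (Real.log_lt_log hu huv)
  refine ⟨p, q, ?_⟩
  have hexp : Real.exp (p * Real.log ω₁ + q * Real.log ω₂) = ω₁ ^ p * ω₂ ^ q := by
    rw [Real.exp_add, Real.exp_nat_mul, Real.exp_nat_mul, Real.exp_log h₁,
      Real.exp_log (zero_lt_one.trans h₂)]
  rw [← hexp, ← Real.exp_log hu, ← Real.exp_log (hu.trans huv)]
  exact ⟨Real.exp_lt_exp.2 hpq.1, Real.exp_lt_exp.2 hpq.2⟩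

lemma List.prod_take_le_max_one_prod {R : Type*} [CommSemiring R] [LinearOrder R]
    [IsStrictOrderedRing R] {l : List R} (hnonneg : ∀ a ∈ l, 0 ≤ a)
    (hsort : l.Pairwise (· ≤ ·)) (i : ℕ) : (l.take i).prod ≤ max 1 l.prod := by
  by_cases hle : ∀ a ∈ l.take i, a ≤ 1
  · refine le_max_of_le_left ?_
    simpa using List.prod_map_le_prod_map₀ id (fun _ => (1 : R))
      (fun a ha => hnonneg a (List.mem_of_mem_take ha)) hle
  · push Not at hle
    obtain ⟨a, ha, ha1⟩ := hle
    -- By sortedness every factor after position `i` exceeds `1`.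
    have hdrop : 1 ≤ (l.drop i).prod := List.one_le_prod fun b hb =>
      ha1.le.trans (hsort.rel_of_mem_take_of_mem_drop ha hb)
    have htake : 0 ≤ (l.take i).prod :=
      List.prod_nonneg fun b hb => hnonneg b (List.mem_of_mem_take hb)
    refine le_max_of_le_right ?_
    rw [← List.prod_take_mul_prod_drop l i]
    exact le_mul_of_one_le_right htake hdrop

section Mahavier

variable {X : Type*} {F : Set (X × X)}

lemma iterate_shiftTwo_apply (n : ℕ) (z : MahavierTwo F) (j : ℤ) :
    ((shiftTwo F)^[n] z : ℤ → X) j = (z : ℤ → X) (j + n) := by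
  induction n generalizing z with
  | zero => simp
  | succ n ih =>
    rw [Function.iterate_succ_apply, ih]
    simp only [shiftTwo]
    push_cast
    ring_nf

lemma shift_mem_mahavierTwo {y : ℤ → X} (hy : y ∈ MahavierTwo F) (k : ℤ) :
    (fun j => y (j + k)) ∈ MahavierTwo F := fun j => by
  simpa only [add_right_comm j 1 k] using hy (j + k)

/-- `x` up to index `r`, then the path `w`, then `y` re-indexed so that `y 0` sits at `r + m`. -/
def splice (x : ℤ → X) (r : ℤ) (w : ℕ → X) (m : ℕ) (y : ℤ → X) : ℤ → X := fun j =>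
  if j ≤ r then x j else if j ≤ r + m then w (j - r).toNat else y (j - (r + m))

variable {x y : ℤ → X} {r : ℤ} {w : ℕ → X} {m : ℕ}

lemma splice_of_le {j : ℤ} (hj : j ≤ r) : splice x r w m y j = x j := if_pos hj

lemma splice_of_mem (hxw : w 0 = x r) {j : ℤ} (hrj : r ≤ j) (hjm : j ≤ r + m) :
    splice x r w m y j = w (j - r).toNat := by
  rcases hrj.eq_or_lt with rfl | hrj
  · simp [splice, hxw]
  · simp [splice, hrj.not_ge, hjm]

lemma splice_of_ge (hxw : w 0 = x r) (hwy : w m = y 0) {j : ℤ} (hj : r + m ≤ j) :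
    splice x r w m y j = y (j - (r + m)) := by
  rcases hj.eq_or_lt with rfl | hj
  · rw [splice_of_mem hxw (by omega) le_rfl, sub_self, ← hwy]
    congr
    omega
  · simp [splice, hj.not_ge, show ¬j ≤ r by omega]

lemma splice_mem_mahavierTwo (hx : x ∈ MahavierTwo F) (hy : y ∈ MahavierTwo F)
    (hw : ∀ i < m, (w i, w (i + 1)) ∈ F) (hxw : w 0 = x r) (hwy : w m = y 0) :
    splice x r w m y ∈ MahavierTwo F := by
  intro j
  rcases lt_or_ge j r with hjr | hrj
  · rw [splice_of_le hjr.le, splice_of_le hjr]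
    exact hx j
  rcases lt_or_ge j (r + m) with hjm | hmj
  · rw [splice_of_mem hxw hrj hjm.le, splice_of_mem hxw (by omega) hjm,
      show (j + 1 - r).toNat = (j - r).toNat + 1 by omega]
    exact hw _ (by omega)
  · rw [splice_of_ge hxw hwy hmj, splice_of_ge hxw hwy (by omega), add_sub_right_comm j 1]
    exact hy _

end Mahavier

lemma exists_cylinder_subset {S : Set (ℤ → ℝ)} {U : Set S} (hU : IsOpen U) {x : S}
    (hx : x ∈ U) :
    ∃ R : ℕ, ∃ ε > 0, ∀ z : S,
      (∀ j : ℤ, j.natAbs ≤ R → |(z : ℤ → ℝ) j - (x : ℤ → ℝ) j| < ε) → z ∈ U := by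
  obtain ⟨W, hW, rfl⟩ := isOpen_induced_iff.1 hU
  obtain ⟨I, u, hu, hIu⟩ := isOpen_pi_iff.1 hW _ hx
  have hsmall : ∀ᶠ ε in 𝓝[>] (0 : ℝ), ∀ j ∈ I, Metric.ball ((x : ℤ → ℝ) j) ε ⊆ u j := by
    refine (eventually_all_finset I).2 fun j hj => ?_
    obtain ⟨δ, hδ, hball⟩ := Metric.isOpen_iff.1 (hu j hj).1 _ (hu j hj).2
    filter_upwards [Ioo_mem_nhdsGT hδ] with ε hε
    exact (Metric.ball_subset_ball hε.2.le).trans hball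
  obtain ⟨ε, hball, hε⟩ := (hsmall.and self_mem_nhdsWithin).exists
  refine ⟨I.sup Int.natAbs, ε, hε, fun z hz => hIu fun j hj => hball j hj ?_⟩
  rw [Metric.mem_ball, Real.dist_eq]
  exact hz j (Finset.le_sup hj)

section FOmega

variable {Ω : Finset ℝ}

lemma smul_mem_mahavierTwo_FOmega {y : ℤ → ℝ} (hy : y ∈ MahavierTwo (FOmega Ω)) {c : ℝ}
    (hc₀ : 0 ≤ c) (hc₁ : c ≤ 1) : (fun j => c * y j) ∈ MahavierTwo (FOmega Ω) := by
  have hIcc : ∀ j, c * y j ∈ Icc (0 : ℝ) 1 := fun j =>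
    ⟨mul_nonneg hc₀ (hy j).1.1, mul_le_one₀ hc₁ (hy j).1.1 (hy j).1.2⟩
  intro j
  obtain ⟨-, -, ω, hω, hstep⟩ := hy j
  refine ⟨hIcc j, hIcc (j + 1), ω, hω, ?_⟩
  change c * y (j + 1) = ω * (c * y j)
  rw [show y (j + 1) = ω * y j from hstep]
  ring

lemma eq_zero_of_mem_mahavierTwo_FOmega (hpos : ∀ ω ∈ Ω, 0 < ω) {x : ℤ → ℝ}
    (hx : x ∈ MahavierTwo (FOmega Ω)) {j₀ : ℤ} (h₀ : x j₀ = 0) (j : ℤ) : x j = 0 := by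
  have hstep : ∀ k, x (k + 1) = 0 ↔ x k = 0 := fun k => by
    obtain ⟨-, -, ω, hω, h⟩ := hx k
    simp [show x (k + 1) = ω * x k from h, (hpos ω hω).ne']
  exact Int.inductionOn' j j₀ h₀ (fun k _ hk => (hstep k).2 hk)
    fun k _ hk => (hstep (k - 1)).1 (by rwa [sub_add_cancel])

lemma exists_pos_mem_mahavierTwo_FOmega {ω₁ ω₂ : ℝ} (h₁ : ω₁ ∈ Ω) (h₂ : ω₂ ∈ Ω)
    (hω₁₀ : 0 < ω₁) (hω₁ : ω₁ < 1) (hω₂ : 1 < ω₂) :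
    ∃ e ∈ MahavierTwo (FOmega Ω), ∀ j, 0 < e j := by
  have hω₂₀ : 0 < ω₂ := zero_lt_one.trans hω₂
  set e : ℤ → ℝ := fun j => if j ≤ 0 then ω₂ ^ j else ω₁ ^ j
  have hIcc : ∀ j, e j ∈ Icc (0 : ℝ) 1 := fun j => by
    simp only [e]
    split_ifs with hj
    · exact ⟨by positivity, zpow_le_one_of_nonpos₀ hω₂.le hj⟩
    · exact ⟨by positivity, zpow_le_one₀ hω₁₀ hω₁.le (by omega)⟩
  refine ⟨e, fun j => ⟨hIcc j, hIcc (j + 1), ?_⟩, fun j => ?_⟩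
  · rcases lt_or_ge j 0 with hj | hj
    · refine ⟨ω₂, h₂, ?_⟩
      simp only [e, hj.le, show j + 1 ≤ 0 by omega, if_true, zpow_add_one₀ hω₂₀.ne']
      ring
    · have hej : e j = ω₁ ^ j := by
        simp only [e]
        split_ifs with h
        · simp [le_antisymm h hj]
        · rfl
      refine ⟨ω₁, h₁, ?_⟩
      simp only [hej, e, show ¬j + 1 ≤ 0 by omega, if_false, zpow_add_one₀ hω₁₀.ne']
      ring
  · simp only [e]
    split_ifs
    · exact zpow_pos hω₂₀ j
    · exact zpow_pos hω₁₀ j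

lemma exists_pos_mem_of_isOpen (hpos : ∀ ω ∈ Ω, 0 < ω) {e : ℤ → ℝ}
    (he : e ∈ MahavierTwo (FOmega Ω)) (hepos : ∀ j, 0 < e j)
    {U : Set (MahavierTwo (FOmega Ω))} (hU : IsOpen U) (hne : U.Nonempty) :
    ∃ x ∈ U, ∀ j, 0 < (x : ℤ → ℝ) j := by
  obtain ⟨x, hx⟩ := hne
  by_cases hxpos : ∀ j, 0 < (x : ℤ → ℝ) j
  · exact ⟨x, hx, hxpos⟩
  push Not at hxpos
  obtain ⟨j₀, hj₀⟩ := hxpos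
  have hzero := eq_zero_of_mem_mahavierTwo_FOmega hpos x.2 (le_antisymm hj₀ (x.2 j₀).1.1)
  obtain ⟨R, ε, hε, hcyl⟩ := exists_cylinder_subset hU hx
  set δ := min (ε / 2) 1
  have hδ : 0 < δ := lt_min (half_pos hε) one_pos
  refine ⟨⟨_, smul_mem_mahavierTwo_FOmega he hδ.le (min_le_right _ _)⟩, hcyl _ fun j _ => ?_,
    fun j => mul_pos hδ (hepos j)⟩
  rw [hzero, sub_zero, abs_of_pos (mul_pos hδ (hepos j))]
  calc δ * e j ≤ δ := mul_le_of_le_one_right hδ.le (he j).1.2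
    _ ≤ ε / 2 := min_le_left _ _
    _ < ε := half_lt_self hε

lemma exists_path_FOmega (hnonneg : ∀ ω ∈ Ω, 0 ≤ ω) {s : Multiset ℝ} (hs : ∀ ω ∈ s, ω ∈ Ω)
    {a : ℝ} (ha₀ : 0 ≤ a) (ha₁ : a ≤ 1) (has : a * s.prod ≤ 1) :
    ∃ w : ℕ → ℝ, w 0 = a ∧ w (Multiset.card s) = a * s.prod ∧
      ∀ i < Multiset.card s, (w i, w (i + 1)) ∈ FOmega Ω := by
  -- Multiplying the factors in increasing order keeps every partial product below
  -- the larger of the two endpoints.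
  set L := s.sort (· ≤ ·)
  have hL : ∀ ω ∈ L, ω ∈ Ω := fun ω h => hs ω ((Multiset.mem_sort _).1 h)
  have hLnonneg : ∀ ω ∈ L, 0 ≤ ω := fun ω h => hnonneg ω (hL ω h)
  have hLprod : L.prod = s.prod := by rw [← Multiset.prod_coe, Multiset.sort_eq]
  have hLlen : L.length = Multiset.card s := Multiset.length_sort _
  have hIcc : ∀ i, a * (L.take i).prod ∈ Icc (0 : ℝ) 1 := fun i => by
    refine ⟨mul_nonneg ha₀ (List.prod_nonneg fun ω h => hLnonneg ω (List.mem_of_mem_take h)), ?_⟩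
    calc a * (L.take i).prod
        ≤ a * max 1 L.prod :=
          mul_le_mul_of_nonneg_left
            (List.prod_take_le_max_one_prod hLnonneg (Multiset.pairwise_sort s _) i) ha₀
      _ = max a (a * s.prod) := by rw [mul_max_of_nonneg _ _ ha₀, mul_one, hLprod]
      _ ≤ 1 := max_le ha₁ has
  refine ⟨fun i => a * (L.take i).prod, by simp, ?_, fun i hi => ?_⟩
  · simp only [← hLlen, List.take_length, hLprod]
  · have hi' : i < L.length := hLlen ▸ hi
    refine ⟨hIcc i, hIcc (i + 1), L[i], hL _ (List.getElem_mem hi'), ?_⟩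
    simp only [List.prod_take_succ L i hi']
    ring

lemma exists_multiset_card_eq_prod_eq {K : ℕ}
    (hA : ∀ M : ℕ, K ≤ M → ∃ m : ℝ → ℕ, (∑ ω ∈ Ω, m ω) = M ∧ (∏ ω ∈ Ω, ω ^ m ω) = 1)
    {t : Multiset ℝ} (ht : ∀ ω ∈ t, ω ∈ Ω) {n : ℕ} (hn : K + Multiset.card t ≤ n) :
    ∃ s : Multiset ℝ, (∀ ω ∈ s, ω ∈ Ω) ∧ Multiset.card s = n ∧ s.prod = t.prod := by
  obtain ⟨m, hsum, hprod⟩ := hA (n - Multiset.card t) (by omega)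
  refine ⟨(∑ ω ∈ Ω, Multiset.replicate (m ω) ω) + t, fun ω hω => ?_, ?_, ?_⟩
  · rcases Multiset.mem_add.1 hω with hω | hω
    · obtain ⟨ω', hω', hωω'⟩ := Multiset.mem_sum.1 hω
      rwa [Multiset.eq_of_mem_replicate hωω']
    · exact ht ω hω
  · simp only [Multiset.card_add, Multiset.card_sum, Multiset.card_replicate, hsum]
    omega
  · simp [Multiset.prod_sum, hprod]

theorem exists_connecting_mem_mahavierTwo_FOmega (hpos : ∀ ω ∈ Ω, 0 < ω) {K : ℕ}
    (hA : ∀ M : ℕ, K ≤ M → ∃ m : ℝ → ℕ, (∑ ω ∈ Ω, m ω) = M ∧ (∏ ω ∈ Ω, ω ^ m ω) = 1)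
    {ω₁ ω₂ : ℝ} (h₁ : ω₁ ∈ Ω) (h₂ : ω₂ ∈ Ω) (hω₁ : ω₁ < 1) (hω₂ : 1 < ω₂)
    (hLF : ∀ k l : ℤ, ω₁ ^ k = ω₂ ^ l → k = 0 ∧ l = 0)
    {x y : ℤ → ℝ} (hx : x ∈ MahavierTwo (FOmega Ω)) (hy : y ∈ MahavierTwo (FOmega Ω))
    (R : ℕ) (hxR : 0 < x R) (hyR : 0 < y (-R)) {η : ℝ} (hη : 0 < η) :
    ∃ N : ℕ, ∀ n ≥ N, ∃ z ∈ MahavierTwo (FOmega Ω),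
      (∀ j ≤ (R : ℤ), z j = x j) ∧ ∀ j ≥ -(R : ℤ), |z (j + n) - y j| < η := by
  set a := x R
  set b := y (-R)
  -- Steer from `a` to some `c ∈ (b / (1 + η), b)`; then `(c / b) • y` is `η`-close to `y`.
  obtain ⟨p, q, hpq⟩ := exists_pow_mul_pow_mem_Ioo (hpos ω₁ h₁) hω₁ hω₂ hLF
    (u := b / (a * (1 + η))) (v := b / a) (by positivity)
    (div_lt_div_of_pos_left hyR hxR (lt_mul_of_one_lt_right hxR (by linarith)))
  set t := Multiset.replicate p ω₁ + Multiset.replicate q ω₂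
  have ht : ∀ ω ∈ t, ω ∈ Ω := fun ω hω => by
    rcases Multiset.mem_add.1 hω with hω | hω <;> rw [Multiset.eq_of_mem_replicate hω] <;>
      assumption
  refine ⟨2 * R + (K + Multiset.card t), fun n hn => ?_⟩
  obtain ⟨s, hsΩ, hcard, hprod⟩ := exists_multiset_card_eq_prod_eq hA ht
    (n := n - 2 * R) (by omega)
  have hts : t.prod = ω₁ ^ p * ω₂ ^ q := by simp [t]
  set c := a * s.prod
  have hcb : c < b := by
    have := hpq.2
    rw [← hts, ← hprod, lt_div_iff₀ hxR] at this
    linarith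
  have hbc : b < c * (1 + η) := by
    have := hpq.1
    rw [← hts, ← hprod, div_lt_iff₀ (by positivity)] at this
    linarith
  have hc₀ : 0 < c := pos_of_mul_pos_left (hyR.trans hbc) (by linarith)
  obtain ⟨w, hw₀, hwc, hw⟩ := exists_path_FOmega (fun ω h => (hpos ω h).le) hsΩ hxR.le (hx R).1.2
    (hcb.le.trans (hy _).1.2)
  have hcb₁ : c / b ≤ 1 := (div_le_one hyR).2 hcb.le
  set y' : ℤ → ℝ := fun j => c / b * y (j - R)
  have hy' : y' ∈ MahavierTwo (FOmega Ω) := smul_mem_mahavierTwo_FOmega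
    (by simpa [sub_eq_add_neg] using shift_mem_mahavierTwo hy (-R))
    (div_nonneg hc₀.le hyR.le) hcb₁
  have hwy : w (Multiset.card s) = y' 0 := by
    rw [hwc]
    simp only [y', zero_sub]
    exact (div_mul_cancel₀ c hyR.ne').symm
  refine ⟨splice x R w (Multiset.card s) y', splice_mem_mahavierTwo hx hy' hw hw₀ hwy,
    fun j hj => splice_of_le hj, fun j hj => ?_⟩
  rw [splice_of_ge hw₀ hwy (by omega)]
  simp only [y', show j + n - (R + Multiset.card s) - R = j by omega]
  have hcb₂ : 1 - η < c / b := by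
    rw [lt_div_iff₀ hyR]
    nlinarith
  have hyj := (hy j).1
  rw [abs_sub_comm, show y j - c / b * y j = (1 - c / b) * y j by ring,
    abs_of_nonneg (mul_nonneg (by linarith) hyj.1)]
  calc (1 - c / b) * y j ≤ 1 - c / b := mul_le_of_le_one_right (by linarith) hyj.2
    _ < η := by linarith

end FOmega

/-- Let `Ω` be an LF-inducing set. If there is `K ≥ 1` such that for
every `M ≥ K` one can write `1 = ∏_{ω ∈ Ω} ω^{m_ω}` with nonnegative integers `m_ω`
summing to `M`, then the two-sided Mahavier system of `F_Ω` is topologically mixing. -/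
theorem stmt18 (Ω : Finset ℝ) (hΩ : LFInducing Ω)
    (h : ∃ K : ℕ, 0 < K ∧ ∀ M : ℕ, K ≤ M →
      ∃ m : ℝ → ℕ, (∑ ω ∈ Ω, m ω) = M ∧ (∏ ω ∈ Ω, ω ^ m ω) = 1) :
    TopMixing (shiftTwo (FOmega Ω)) := by
  obtain ⟨K, -, hA⟩ := h
  obtain ⟨-, hpos, ω₁, h₁, ω₂, h₂, hω₁, hω₂, hLF⟩ := hΩ
  obtain ⟨e, he, hepos⟩ := exists_pos_mem_mahavierTwo_FOmega h₁ h₂ (hpos ω₁ h₁) hω₁ hω₂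
  intro U V hU hV hUne hVne
  obtain ⟨x, hxU, hxpos⟩ := exists_pos_mem_of_isOpen hpos he hepos hU hUne
  obtain ⟨y, hyV, hypos⟩ := exists_pos_mem_of_isOpen hpos he hepos hV hVne
  obtain ⟨R₁, ε₁, hε₁, hU⟩ := exists_cylinder_subset hU hxU
  obtain ⟨R₂, ε₂, hε₂, hV⟩ := exists_cylinder_subset hV hyV
  obtain ⟨N, hN⟩ := exists_connecting_mem_mahavierTwo_FOmega hpos hA h₁ h₂ hω₁ hω₂ hLF x.2 y.2
    (max R₁ R₂) (hxpos _) (hypos _) hε₂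
  refine ⟨N, fun n hn => ?_⟩
  obtain ⟨z, hz, hzx, hzy⟩ := hN n hn
  refine ⟨_, ⟨⟨z, hz⟩, hU _ fun j hj => ?_, rfl⟩, hV _ fun j hj => ?_⟩
  · simpa [hzx j (by omega)] using hε₁
  · rw [iterate_shiftTwo_apply]
    exact hzy j (by omega)
end

section
/- Let Ω = {ω_1, ..., ω_n} be an LF-inducing set, and for each positive integer M define 𝒜(M) = { ∏_{i=1}^n ω_i^{m_i} : m_1, ..., m_n nonnegative integers with ∑_{i=1}^n m_i = M }. If there exists a positive integer M such that 1 ∈ 𝒜(M), then neither the two-sided Mahavier dynamical system (I_{F_Ω}, σ_{F_Ω}) nor the one-sided Mahavier dynamical system (I^+_{F_Ω}, σ^+_{F_Ω}) has the shadowing property. -/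
open Set Filter Topology

/-! A relation `1 = ∏ ω^{m_ω}` is a word in `Ω` of length `M` with product `1`, hence a periodic
`F_Ω`-orbit `q` of period `M`, indexed by `ZMod M`. Multiplying the `k`-th shift of `q` by a factor
that creeps from `1` to `2` with speed `η` gives an `η/2`-pseudo-orbit. Every `M` steps a true orbit
is multiplied by an element of the finite set `Ω^M`, and the elements of `Ω^M` exceeding `1`
exceed some `ρ > 1`. An orbit that `ε`-shadows the pseudo-orbit can therefore never grow over `M`
steps when `ε` and `η` are small compared with `ρ - 1`, whereas the pseudo-orbit doubles. -/

open scoped Pointwise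

theorem Finset.exists_gap_above_one (S : Finset ℝ) : ∃ ρ, 1 < ρ ∧ ∀ r ∈ S, r ≤ 1 ∨ ρ ≤ r := by
  set T := insert 2 (S.filter (1 < ·))
  have hT : T.Nonempty := insert_nonempty _ _
  refine ⟨T.min' hT, (T.lt_min'_iff hT).2 fun y hy => ?_, fun r hr => ?_⟩
  · rcases mem_insert.1 hy with rfl | hy
    · norm_num
    · exact (mem_filter.1 hy).2
  · rcases le_or_gt r 1 with h | h
    · exact .inl h
    · exact .inr (T.min'_le r (mem_insert_of_mem (mem_filter.2 ⟨hr, h⟩)))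

theorem exists_mem_pow_eq_mul {α : Type*} [Monoid α] [DecidableEq α] {Ω : Finset α} {y : ℕ → α}
    (hy : ∀ t, ∃ ω ∈ Ω, y (t + 1) = ω * y t) (t : ℕ) : ∀ n, ∃ r ∈ Ω ^ n, y (t + n) = r * y t
  | 0 => ⟨1, by simp, by simp⟩
  | n + 1 => by
    obtain ⟨r, hr, hyr⟩ := exists_mem_pow_eq_mul hy t n
    obtain ⟨ω, hω, hyω⟩ := hy (t + n)
    exact ⟨ω * r, pow_succ' Ω n ▸ Finset.mul_mem_mul hω hr,
      by rw [← add_assoc, hyω, hyr, mul_assoc]⟩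

theorem tracked_target_lt {S : Set ℝ} {ρ s ε κ : ℝ} {a z : ℕ → ℝ} (hρ : 1 < ρ)
    (hgap : ∀ r ∈ S, r ≤ 1 ∨ ρ ≤ r) (hsmall : κ + (ρ + 1) * ε ≤ (ρ - 1) * s)
    (ha : ∀ j, s ≤ a j) (ha_step : ∀ j, a (j + 1) ≤ a j + κ) (hz_nonneg : ∀ j, 0 ≤ z j)
    (hz : ∀ j, ∃ r ∈ S, z (j + 1) = r * z j) (htrack : ∀ j, |z j - a j| < ε) (j : ℕ) :
    a j < a 0 + 2 * ε := by
  have hanti : Antitone z := antitone_nat_of_succ_le fun j => by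
    obtain ⟨r, hr, hzr⟩ := hz j
    rcases hgap r hr with hr1 | hρr
    · rw [hzr]
      exact mul_le_of_le_one_left (hz_nonneg j) hr1
    · have h₀ := abs_lt.1 (htrack j)
      have h₁ := abs_lt.1 (htrack (j + 1))
      have : ρ * z j ≤ z (j + 1) := hzr ▸ mul_le_mul_of_nonneg_right hρr (hz_nonneg j)
      nlinarith [ha j, ha_step j]
  have h₀ := abs_lt.1 (htrack 0)
  have hj := abs_lt.1 (htrack j)
  linarith [hanti (Nat.zero_le j)]

theorem exists_list_prod_eq_one {α : Type*} [CommMonoid α] {Ω : Finset α} {m : α → ℕ}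
    (hm : 0 < ∑ ω ∈ Ω, m ω) (hprod : ∏ ω ∈ Ω, ω ^ m ω = 1) :
    ∃ l : List α, l ≠ [] ∧ (∀ x ∈ l, x ∈ Ω) ∧ l.prod = 1 := by
  set t : Multiset α := ∑ ω ∈ Ω, Multiset.replicate (m ω) ω
  refine ⟨t.toList, ?_, fun x hx => ?_, ?_⟩
  · rw [ne_eq, ← List.length_eq_zero_iff, Multiset.length_toList, Multiset.card_sum]
    simpa using hm.ne'
  · obtain ⟨ω, hω, hx⟩ := Multiset.mem_sum.1 (Multiset.mem_toList.1 hx)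
    rwa [Multiset.eq_of_mem_replicate hx]
  · rw [Multiset.prod_toList, Multiset.prod_sum]
    simpa [Multiset.prod_replicate] using hprod

def cycPrefixProd {α : Type*} [Monoid α] (l : List α) (i : ZMod l.length) : α :=
  (l.take i.val).prod

theorem cycPrefixProd_add_one {α : Type*} [Monoid α] {l : List α} [NeZero l.length]
    (hl : l.prod = 1) (i : ZMod l.length) :
    cycPrefixProd l (i + 1) = cycPrefixProd l i * l[i.val]'(ZMod.val_lt i) := by
  have hi := ZMod.val_lt i
  have hval : (i + 1).val = (i.val + 1) % l.length := by
    rw [← ZMod.val_natCast, Nat.cast_add_one, ZMod.natCast_zmod_val]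
  unfold cycPrefixProd
  rw [hval]
  rcases (Nat.succ_le_of_lt hi).lt_or_eq with h | h
  · rw [Nat.mod_eq_of_lt h, List.prod_take_succ]
  · rw [← List.prod_take_succ _ _ hi, ← Nat.succ_eq_add_one, h, Nat.mod_self, List.take_zero,
      List.prod_nil, List.take_length, hl]

theorem exists_periodic_orbit_of_list_prod_eq_one {Ω : Finset ℝ} {l : List ℝ} (hne : l ≠ [])
    (hlΩ : ∀ x ∈ l, x ∈ Ω) (hpos : ∀ ω ∈ Ω, 0 < ω) (hl : l.prod = 1) :
    ∃ M, ∃ _ : NeZero M, ∃ q : ZMod M → ℝ,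
      (∀ i, q i ∈ Ioc 0 (1 / 2)) ∧ ∀ i, ∃ ω ∈ Ω, q (i + 1) = ω * q i := by
  have : NeZero l.length := ⟨by simpa using hne⟩
  have hq : ∀ i, 0 < cycPrefixProd l i := fun i =>
    List.prod_pos fun x hx => hpos x (hlΩ x (List.mem_of_mem_take hx))
  set B := ∑ i, cycPrefixProd l i
  have hB : ∀ i, cycPrefixProd l i ≤ B := fun i =>
    Finset.single_le_sum (fun j _ => (hq j).le) (Finset.mem_univ i)
  have hB0 : 0 < B := (hq 0).trans_le (hB 0)
  refine ⟨l.length, inferInstance, fun i => cycPrefixProd l i / (2 * B),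
    fun i => ⟨div_pos (hq i) (by positivity), ?_⟩,
    fun i => ⟨_, hlΩ _ (List.getElem_mem (ZMod.val_lt i)), ?_⟩⟩
  · rw [div_le_iff₀ (by positivity)]
    linarith [hB i]
  · dsimp only
    rw [cycPrefixProd_add_one hl]
    ring

def driftOrbit {M : ℕ} (q : ZMod M → ℝ) (η : ℝ) (k : ℕ) (t : ZMod M) : ℝ :=
  min (1 + k * η) 2 * q (t + k)

section DriftOrbit

variable {M : ℕ} {q : ZMod M → ℝ} {η : ℝ}

theorem driftOrbit_mem_Icc (hq : ∀ i, q i ∈ Ioc 0 (1 / 2)) (hη : 0 ≤ η) (k : ℕ) (t : ZMod M) :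
    driftOrbit q η k t ∈ Icc 0 1 := by
  obtain ⟨h₀, h₁⟩ := hq (t + k)
  have : 1 ≤ 1 + k * η := le_add_of_nonneg_right (by positivity)
  constructor
  · exact mul_nonneg (le_min (by linarith) (by norm_num)) h₀.le
  · calc driftOrbit q η k t ≤ 2 * (1 / 2) := mul_le_mul (min_le_right _ _) h₁ h₀.le (by norm_num)
      _ = 1 := by norm_num

theorem driftOrbit_mem_FOmega {Ω : Finset ℝ} (hq : ∀ i, q i ∈ Ioc 0 (1 / 2))
    (hqΩ : ∀ i, ∃ ω ∈ Ω, q (i + 1) = ω * q i) (hη : 0 ≤ η) (k : ℕ) (t : ZMod M) :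
    (driftOrbit q η k t, driftOrbit q η k (t + 1)) ∈ FOmega Ω := by
  obtain ⟨ω, hω, hqω⟩ := hqΩ (t + k)
  refine ⟨driftOrbit_mem_Icc hq hη k t, driftOrbit_mem_Icc hq hη k (t + 1), ω, hω, ?_⟩
  simp only [driftOrbit, add_right_comm t 1, hqω]
  ring

theorem dist_driftOrbit_succ_le (hq : ∀ i, q i ∈ Ioc 0 (1 / 2)) (k : ℕ) (t : ZMod M) :
    dist (driftOrbit q η k (t + 1)) (driftOrbit q η (k + 1) t) ≤ |η| / 2 := by
  obtain ⟨h₀, h₁⟩ := hq (t + 1 + k)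
  have hfactor : |min (1 + k * η) 2 - min (1 + (k + 1 : ℕ) * η) 2| ≤ |η| := by
    refine (abs_min_sub_min_le_max _ _ _ _).trans ?_
    simp only [sub_self, abs_zero]
    push_cast
    rw [max_eq_left (abs_nonneg _)]
    ring_nf
    rw [abs_neg]
  rw [driftOrbit, driftOrbit, show t + ((k + 1 : ℕ) : ZMod M) = t + 1 + k by push_cast; ring,
    Real.dist_eq, ← sub_mul, abs_mul, abs_of_pos h₀]
  calc _ ≤ |η| * (1 / 2) := mul_le_mul hfactor h₁ h₀.le (abs_nonneg _)
    _ = |η| / 2 := by ring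

end DriftOrbit

theorem exists_far_from_creeping_target {S : Set ℝ} {ρ c ε d : ℝ} (hρ : 1 < ρ)
    (hgap : ∀ r ∈ S, r ≤ 1 ∨ ρ ≤ r) (hc : 0 < c) (hd : 0 < d) (hdρ : 2 * d ≤ ρ - 1)
    (hε : 2 * (ρ + 1) * ε ≤ (ρ - 1) * c) {z : ℕ → ℝ} (hz_nonneg : ∀ j, 0 ≤ z j)
    (hz : ∀ j, ∃ r ∈ S, z (j + 1) = r * z j) : ∃ j : ℕ, ε ≤ |z j - min (1 + j * d) 2 * c| := by
  by_contra! htrack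
  set J := ⌈1 / d⌉₊
  have hclimb := tracked_target_lt (κ := c * d) hρ hgap (by nlinarith)
    (fun j => le_mul_of_one_le_left hc.le (le_min (by nlinarith [j.cast_nonneg (α := ℝ)])
      one_le_two))
    (fun j => ?_) hz_nonneg hz htrack J
  · have hJ : 1 ≤ J * d := (div_le_iff₀ hd).1 (Nat.le_ceil _)
    rw [min_eq_right (by linarith), Nat.cast_zero, zero_mul, add_zero,
      min_eq_left one_le_two] at hclimb
    nlinarith
  · have : min (1 + (j + 1 : ℕ) * d) 2 ≤ min (1 + j * d) 2 + d := by
      rw [← min_add_add_right]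
      exact min_le_min (by push_cast; linarith) (by linarith)
    nlinarith

theorem exists_far_of_driftOrbit {Ω : Finset ℝ} {M : ℕ} [NeZero M] {q : ZMod M → ℝ}
    (hq₀ : 0 < q 0) :
    ∃ ε > 0, ∃ η₀ > 0, ∀ η, 0 < η → η ≤ η₀ → ∀ y : ℕ → ℝ, (∀ t, 0 ≤ y t) →
      (∀ t, ∃ ω ∈ Ω, y (t + 1) = ω * y t) → ∃ k, ε ≤ |y k - driftOrbit q η k 0| := by
  obtain ⟨ρ, hρ, hgap⟩ := (Ω ^ M).exists_gap_above_one
  have hM : (0 : ℝ) < M := Nat.cast_pos.2 (NeZero.pos M)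
  have hρ₁ : 0 < ρ - 1 := sub_pos.2 hρ
  refine ⟨(ρ - 1) * q 0 / (2 * (ρ + 1)), div_pos (mul_pos hρ₁ hq₀) (by linarith),
    (ρ - 1) / (2 * M), div_pos hρ₁ (by positivity), fun η hη hηη₀ y hy_nonneg hyΩ => ?_⟩
  obtain ⟨j, hj⟩ := exists_far_from_creeping_target (S := ↑(Ω ^ M)) (d := M * η)
    (ε := (ρ - 1) * q 0 / (2 * (ρ + 1))) (z := fun j => y (j * M)) hρ hgap hq₀ (by positivity)
    (by rw [le_div_iff₀ (by positivity)] at hηη₀; linarith)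
    (le_of_eq (by field_simp)) (fun j => hy_nonneg _)
    (fun j => add_one_mul j M ▸ exists_mem_pow_eq_mul hyΩ (j * M) M)
  exact ⟨j * M, by simpa [driftOrbit, mul_assoc] using hj⟩

section Metrics

variable {X : Type*} [PseudoMetricSpace X] {C : ℝ}

theorem DTwo_le {x y : ℤ → X} (hC : 0 ≤ C) (h : ∀ n, dist (x n) (y n) ≤ C) : DTwo x y ≤ C :=
  Real.iSup_le (fun n => (div_le_self dist_nonneg (one_le_pow₀ one_le_two)).trans (h n)) hC

theorem div_le_DTwo {x y : ℤ → X} (h : ∀ n, dist (x n) (y n) ≤ C) (n : ℤ) :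
    dist (x n) (y n) / 2 ^ n.natAbs ≤ DTwo x y :=
  le_ciSup ⟨C, forall_mem_range.2 fun m =>
    (div_le_self dist_nonneg (one_le_pow₀ one_le_two)).trans (h m)⟩ n

theorem DPlus_le {x y : ℕ → X} (hC : 0 ≤ C) (h : ∀ n, dist (x n) (y n) ≤ C) : DPlus x y ≤ C :=
  Real.iSup_le (fun n => (div_le_self dist_nonneg (one_le_pow₀ one_le_two)).trans (h n)) hC

theorem div_le_DPlus {x y : ℕ → X} (h : ∀ n, dist (x n) (y n) ≤ C) (n : ℕ) :
    dist (x n) (y n) / 2 ^ (n + 1) ≤ DPlus x y :=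
  le_ciSup (f := fun m => dist (x m) (y m) / 2 ^ (m + 1)) ⟨C, forall_mem_range.2 fun m =>
    (div_le_self dist_nonneg (one_le_pow₀ one_le_two)).trans (h m)⟩ n

end Metrics

theorem shiftTwo_iterate_apply {X : Type*} (F : Set (X × X)) (y : MahavierTwo F) (k : ℕ)
    (n : ℤ) : ((shiftTwo F)^[k] y : ℤ → X) n = (y : ℤ → X) (n + k) := by
  induction k generalizing n with
  | zero => simp
  | succ k ih =>
    rw [Function.iterate_succ_apply']
    exact (ih (n + 1)).trans (by push_cast; ring_nf)

theorem shiftPlus_iterate_apply {X : Type*} (F : Set (X × X)) (y : MahavierPlus F) (k : ℕ)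
    (n : ℕ) : ((shiftPlus F)^[k] y : ℕ → X) n = (y : ℕ → X) (n + k) := by
  induction k generalizing n with
  | zero => simp
  | succ k ih =>
    rw [Function.iterate_succ_apply']
    exact (ih (n + 1)).trans (by ring_nf)

section NoShadowing

variable {Ω : Finset ℝ} {M : ℕ} [NeZero M] {q : ZMod M → ℝ}

theorem not_shadowingProp_shiftTwo (hq : ∀ i, q i ∈ Ioc 0 (1 / 2))
    (hqΩ : ∀ i, ∃ ω ∈ Ω, q (i + 1) = ω * q i) :
    ¬ ShadowingProp (fun a b : MahavierTwo (FOmega Ω) => DTwo (a : ℤ → ℝ) (b : ℤ → ℝ))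
        (shiftTwo (FOmega Ω)) := by
  intro hshadow
  obtain ⟨ε, hε, η₀, hη₀, hfar⟩ := exists_far_of_driftOrbit (Ω := Ω) (hq 0).1
  obtain ⟨δ, hδ, hδshadow⟩ := hshadow ε hε
  have hη : 0 < min η₀ δ := lt_min hη₀ hδ
  let X : ℕ → MahavierTwo (FOmega Ω) := fun k => ⟨fun n => driftOrbit q (min η₀ δ) k n,
    fun n => by simpa using driftOrbit_mem_FOmega hq hqΩ hη.le k n⟩
  obtain ⟨y, hy⟩ := hδshadow X fun k =>
    (DTwo_le (C := |min η₀ δ| / 2) (by positivity) fun n => by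
      simpa [X, shiftTwo] using dist_driftOrbit_succ_le hq k n).trans_lt
      (by rw [abs_of_pos hη]; linarith [min_le_right η₀ δ])
  obtain ⟨k, hk⟩ := hfar _ hη (min_le_left _ _) (fun t => (y : ℤ → ℝ) t)
    (fun t => (y.2 t).1.1) (fun t => by simpa using (y.2 t).2.2)
  have hdist := div_le_DTwo (fun n => Real.dist_le_of_mem_Icc_01
    (((shiftTwo (FOmega Ω))^[k] y).2 n).1 ((X k).2 n).1) 0
  rw [shiftTwo_iterate_apply] at hdist
  simp [X, Real.dist_eq] at hdist
  linarith [hy k]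

theorem not_shadowingProp_shiftPlus (hq : ∀ i, q i ∈ Ioc 0 (1 / 2))
    (hqΩ : ∀ i, ∃ ω ∈ Ω, q (i + 1) = ω * q i) :
    ¬ ShadowingProp (fun a b : MahavierPlus (FOmega Ω) => DPlus (a : ℕ → ℝ) (b : ℕ → ℝ))
        (shiftPlus (FOmega Ω)) := by
  intro hshadow
  obtain ⟨ε, hε, η₀, hη₀, hfar⟩ := exists_far_of_driftOrbit (Ω := Ω) (hq 0).1
  obtain ⟨δ, hδ, hδshadow⟩ := hshadow (ε / 2) (half_pos hε)
  have hη : 0 < min η₀ δ := lt_min hη₀ hδ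
  let X : ℕ → MahavierPlus (FOmega Ω) := fun k => ⟨fun n => driftOrbit q (min η₀ δ) k n,
    fun n => by simpa using driftOrbit_mem_FOmega hq hqΩ hη.le k n⟩
  obtain ⟨y, hy⟩ := hδshadow X fun k =>
    (DPlus_le (C := |min η₀ δ| / 2) (by positivity) fun n => by
      simpa [X, shiftPlus] using dist_driftOrbit_succ_le hq k n).trans_lt
      (by rw [abs_of_pos hη]; linarith [min_le_right η₀ δ])
  obtain ⟨k, hk⟩ := hfar _ hη (min_le_left _ _) y (fun t => (y.2 t).1.1) (fun t => (y.2 t).2.2)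
  have hdist := div_le_DPlus (fun n => Real.dist_le_of_mem_Icc_01
    (((shiftPlus (FOmega Ω))^[k] y).2 n).1 ((X k).2 n).1) 0
  rw [shiftPlus_iterate_apply] at hdist
  simp [X, Real.dist_eq] at hdist
  linarith [hy k]

end NoShadowing

/-- Let `Ω` be an LF-inducing set. If there is a positive integer `M`
such that `1 = ∏_{ω ∈ Ω} ω^{m_ω}` for some nonnegative integers `m_ω` summing to `M`,
then neither the two-sided nor the one-sided Mahavier system of `F_Ω` has the shadowing
property. -/
theorem stmt19 (Ω : Finset ℝ) (hΩ : LFInducing Ω)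
    (h : ∃ M : ℕ, 0 < M ∧
      ∃ m : ℝ → ℕ, (∑ ω ∈ Ω, m ω) = M ∧ (∏ ω ∈ Ω, ω ^ m ω) = 1) :
    ¬ ShadowingProp (fun a b : MahavierTwo (FOmega Ω) => DTwo (a : ℤ → ℝ) (b : ℤ → ℝ))
        (shiftTwo (FOmega Ω)) ∧
    ¬ ShadowingProp (fun a b : MahavierPlus (FOmega Ω) => DPlus (a : ℕ → ℝ) (b : ℕ → ℝ))
        (shiftPlus (FOmega Ω)) := by
  obtain ⟨-, hpos, -⟩ := hΩ
  obtain ⟨M, hM, m, hsum, hprod⟩ := h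
  obtain ⟨l, hne, hlΩ, hl⟩ := exists_list_prod_eq_one (hsum ▸ hM) hprod
  obtain ⟨M, _, q, hq, hqΩ⟩ := exists_periodic_orbit_of_list_prod_eq_one hne hlΩ hpos hl
  exact ⟨not_shadowingProp_shiftTwo hq hqΩ, not_shadowingProp_shiftPlus hq hqΩ⟩
end
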